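/- For every stream s: rep s holds if and only if s is globally finally red, i.e., for every n there exists m ≥ n with s m = true. -/

import Mathlib

/-!
Unfolding `U P t` reaches a red position `k` with `P` holding again at `suff t (k + 1)`, so a
post-fixed point of `U` yields red positions beyond every bound. Conversely, "infinitely often
red" is stable under suffixes and gives a first red position, which is exactly what `U` unfolds to,
so it is itself a post-fixed point of `U`.
-/

/-- The suffix of a stream at position `n`. -/
def suff (s : ℕ → Bool) (n : ℕ) : ℕ → Bool := fun k => s (n + k)

/-- The weak-until predicate transformer (greatest fixed point, impredicative). -/
def W (X : (ℕ → Bool) → Prop) (s : ℕ → Bool) : Prop :=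
  ∃ Y : (ℕ → Bool) → Prop, Y s ∧
    ∀ t, Y t → (t 0 = true → X (suff t 1)) ∧ (t 0 = false → Y (suff t 1))

/-- A stream is almost always blue: least fixed point of `W`. -/
def pre (s : ℕ → Bool) : Prop :=
  ∀ P : (ℕ → Bool) → Prop, (∀ t, W P t → P t) → P s

/-- The strong-until predicate transformer (inductive). -/
inductive U (X : (ℕ → Bool) → Prop) : (ℕ → Bool) → Prop
  | red : ∀ t, t 0 = true → X (suff t 1) → U X t
  | blue : ∀ t, t 0 = false → U X (suff t 1) → U X t

/-- A stream is infinitely often red: greatest fixed point of `U`. -/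
def rep (s : ℕ → Bool) : Prop :=
  ∃ P : (ℕ → Bool) → Prop, P s ∧ ∀ t, P t → U P t

/-- `succs s n m` : `m` is the position following the first red position at or after `n`. -/
def succs (s : ℕ → Bool) (n m : ℕ) : Prop :=
  ∃ l, n ≤ l ∧ (∀ k, n ≤ k → k < l → s k = false) ∧ s l = true ∧ m = l + 1

/-- The set of red positions of a stream. -/
def Reds (s : ℕ → Bool) : Set ℕ := {n | s n = true}

/-- The set of blue positions of a stream. -/
def Blues (s : ℕ → Bool) : Set ℕ := {n | s n = false}

/-- A colist is duplicate-free over `A`: entries lie in `A` and entries at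
distinct positions are distinct. -/
def DupFree (l : Stream'.Seq ℕ) (A : Set ℕ) : Prop :=
  (∀ n x, l.get? n = some x → x ∈ A) ∧
  (∀ m n x y, m ≠ n → l.get? m = some x → l.get? n = some y → x ≠ y)

/-- A set of naturals is streamless if every duplicate-free colist over it is finite. -/
def Streamless (A : Set ℕ) : Prop :=
  ∀ l : Stream'.Seq ℕ, DupFree l A → l.Terminates

/-- A set of naturals is almost full if every strictly increasing sequence hits it. -/
def AlmostFull (A : Set ℕ) : Prop :=
  ∀ i : ℕ → ℕ, StrictMono i → ∃ n, i n ∈ A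

/-- A colist is a descending chain of the relation `r` starting at `x`. -/
def IsDescChain (r : ℕ → ℕ → Prop) (x : ℕ) (l : Stream'.Seq ℕ) : Prop :=
  (∀ y, l.get? 0 = some y → r x y) ∧
  (∀ n a b, l.get? n = some a → l.get? (n + 1) = some b → r a b)

/-- `r` is strongly normalizing at `x`: every descending chain starting at `x` is finite. -/
def SN (r : ℕ → ℕ → Prop) (x : ℕ) : Prop :=
  ∀ l : Stream'.Seq ℕ, IsDescChain r x l → l.Terminates

/-- `n` is antifounded wrt `r`: greatest fixed point of the one-step descent operator. -/
def af (r : ℕ → ℕ → Prop) (n : ℕ) : Prop :=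
  ∃ Q : ℕ → Prop, Q n ∧ ∀ k, Q k → ∃ m, r k m ∧ Q m

/-- `atmost n s`: fewer than `n` red positions up to every position `m`. -/
def atmost (n : ℕ) (s : ℕ → Bool) : Prop :=
  ∀ m, ((Finset.range (m + 1)).filter (fun k => s k = true)).card < n

/-- Iterates of the weak-until operator starting from the empty predicate. -/
def Fiter : ℕ → (ℕ → Bool) → Prop
  | 0 => fun _ => False
  | n + 1 => W (Fiter n)

/-- The ω-iterate of the weak-until operator. -/
def Fomega (s : ℕ → Bool) : Prop := ∃ n, Fiter n s

/-- The Lesser Principle of Omniscience. -/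
def LPO : Prop := ∀ s : ℕ → Bool, (∃ n, s n = true) ∨ (∀ n, s n = false)

/-- Markov's Principle. -/
def MP : Prop := ∀ s : ℕ → Bool, ¬(∀ n, s n = false) → ∃ n, s n = true

/-- Noetherian sets of naturals. -/
inductive Noeth : Set ℕ → Prop
  | intro : ∀ A : Set ℕ, (∀ x ∈ A, Noeth (A \ {x})) → Noeth A

def InfOftenRed (t : ℕ → Bool) : Prop := ∀ n, ∃ m, n ≤ m ∧ t m = true

lemma suff_suff (s : ℕ → Bool) (a b : ℕ) : suff (suff s a) b = suff s (a + b) := by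
  funext k; simp only [suff, Nat.add_assoc]

lemma U.exists_red {X : (ℕ → Bool) → Prop} {t : ℕ → Bool} (h : U X t) :
    ∃ k, t k = true ∧ X (suff t (k + 1)) := by
  induction h with
  | red t hred hX => exact ⟨0, hred, hX⟩
  | blue t _ _ ih =>
    obtain ⟨k, hred, hX⟩ := ih
    refine ⟨k + 1, by simpa [suff, Nat.add_comm] using hred, ?_⟩
    rwa [suff_suff, show 1 + (k + 1) = k + 1 + 1 by omega] at hX

lemma U_of_red {X : (ℕ → Bool) → Prop} {t : ℕ → Bool} {m : ℕ} (hred : t m = true)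
    (hX : ∀ k, X (suff t (k + 1))) : U X t := by
  induction m generalizing t with
  | zero => exact U.red t hred (hX 0)
  | succ m ih =>
    cases h0 : t 0
    · refine U.blue t h0 (ih (t := suff t 1) (by simpa [suff, Nat.add_comm] using hred) fun k => ?_)
      rw [suff_suff, show 1 + (k + 1) = k + 1 + 1 by omega]
      exact hX (k + 1)
    · exact U.red t h0 (hX 0)

lemma InfOftenRed.suff {t : ℕ → Bool} (h : InfOftenRed t) (k : ℕ) : InfOftenRed (suff t k) := by
  intro n
  obtain ⟨m, hm, hred⟩ := h (n + k)
  refine ⟨m - k, by omega, ?_⟩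
  show t (k + (m - k)) = true
  rwa [Nat.add_sub_cancel' (by omega)]

lemma InfOftenRed.to_U {t : ℕ → Bool} (h : InfOftenRed t) : U InfOftenRed t := by
  obtain ⟨m, -, hred⟩ := h 0
  exact U_of_red hred fun k => h.suff (k + 1)

lemma infOftenRed_of_postfixed_U {P : (ℕ → Bool) → Prop} (hP : ∀ t, P t → U P t)
    {t : ℕ → Bool} (ht : P t) : InfOftenRed t := by
  intro n
  induction n generalizing t with
  | zero =>
    obtain ⟨k, hred, -⟩ := (hP t ht).exists_red
    exact ⟨k, k.zero_le, hred⟩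
  | succ n ih =>
    obtain ⟨k, -, hk⟩ := (hP t ht).exists_red
    obtain ⟨m, hm, hred⟩ := ih hk
    exact ⟨k + 1 + m, by omega, hred⟩

theorem stmt_6 : ∀ s : ℕ → Bool, rep s ↔ ∀ n, ∃ m, n ≤ m ∧ s m = true := by
  intro s
  constructor
  · rintro ⟨P, hs, hP⟩
    exact infOftenRed_of_postfixed_U hP hs
  · intro h
    exact ⟨InfOftenRed, h, fun _ ht => ht.to_U⟩
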